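/- arXiv:2006.03372 — 2 statements merged into one kernel-verified Lean document; each statement's English description precedes it below -/
import Mathlib

section
/- Let G = (V,E) be a finite undirected simple graph, h a positive integer, v ∈ V, and u ∈ N_v^h(G) with s = dis_G(u,v). Define F_u = {w ∈ N_v^{h-s}(G) : dis_{G(V \ {v})}(u,w) > h}. Then N_u^h(G) \ N_u^h(G(V \ {v})) = {v} ∪ F_u; that is, the vertices removed from the h-hop neighborhood of u by deleting v are exactly v itself together with the vertices of the (h−s)-hop neighborhood of v whose distance to u in G(V \ {v}) exceeds h. -/
open SimpleGraph

variable {V : Type*} [Fintype V] [DecidableEq V]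

/-- The subgraph of `G` induced by the vertex set `S`, viewed as a graph on the
same vertex type (edges are exactly the edges of `G` with both endpoints in `S`). -/
def SimpleGraph.inducedOn (G : SimpleGraph V) (S : Set V) : SimpleGraph V where
  Adj x y := G.Adj x y ∧ x ∈ S ∧ y ∈ S
  symm := ⟨fun _ _ ⟨ha, hx, hy⟩ => ⟨ha.symm, hy, hx⟩⟩
  loopless := ⟨fun _ ⟨ha, _, _⟩ => G.irrefl ha⟩

/-- The `h`-hop neighborhood of `v` in `G`:
all vertices `u ≠ v` with `dis_G(v,u) ≤ h`. -/
def SimpleGraph.hNbhd (G : SimpleGraph V) (h : ℕ) (v : V) : Set V :=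
  {u | u ≠ v ∧ G.edist v u ≤ (h : ℕ∞)}

/-- The `h`-degree of `v` in `G`: the number of vertices in its `h`-hop neighborhood. -/
noncomputable def SimpleGraph.hDeg (G : SimpleGraph V) (h : ℕ) (v : V) : ℕ :=
  (G.hNbhd h v).ncard

/-!
In `G - v` the vertex `v` is isolated, so it always leaves the `h`-hop neighborhood of `u`.
Any other `w` leaves it exactly when `dis_G(u,w) ≤ h < dis_{G-v}(u,w)`; then a shortest
`u`–`w` walk in `G` must pass through `v`, so `s + dis_G(v,w) ≤ h`. Conversely
`s + dis_G(v,w) ≤ h` gives `dis_G(u,w) ≤ h` by the triangle inequality.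
-/

theorem ENat.le_coe_sub_iff_add_le {s h : ℕ} (hsh : s ≤ h) (x : ℕ∞) :
    x ≤ ((h - s : ℕ) : ℕ∞) ↔ (s : ℕ∞) + x ≤ h := by
  induction x using ENat.recTopCoe with
  | top => simp
  | coe x => norm_cast; omega

namespace SimpleGraph

omit [Fintype V] [DecidableEq V]

variable (G : SimpleGraph V) {S : Set V} {u v w : V} {h : ℕ}

theorem edist_inducedOn_eq_top (hv : v ∉ S) (huv : u ≠ v) :
    (G.inducedOn S).edist u v = ⊤ := by
  refine edist_eq_top_of_not_reachable fun ⟨p⟩ => ?_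
  have hp : ¬p.reverse.Nil := Walk.not_nil_of_ne huv.symm
  exact hv (p.reverse.adj_snd hp).2.1

theorem edist_inducedOn_le_length (p : G.Walk u w) (hp : ∀ x ∈ p.support, x ∈ S) :
    (G.inducedOn S).edist u w ≤ p.length := by
  have hedges : ∀ e ∈ p.edges, e ∈ (G.inducedOn S).edgeSet := by
    intro e he
    induction e using Sym2.ind with
    | _ a b => exact ⟨p.adj_of_mem_edges he, hp a (p.fst_mem_support_of_mem_edges he),
        hp b (p.snd_mem_support_of_mem_edges he)⟩
  simpa using edist_le (p.transfer _ hedges)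

theorem edist_add_edist_le_of_lt_edist_inducedOn_compl
    (hlt : G.edist u w < (G.inducedOn {v}ᶜ).edist u w) :
    G.edist u v + G.edist v w ≤ G.edist u w := by
  classical
  obtain ⟨p, hp⟩ := exists_walk_of_edist_ne_top hlt.ne_top
  have hv : v ∈ p.support := by
    by_contra hv
    refine (hlt.trans_le ((G.edist_inducedOn_le_length p ?_).trans hp.le)).false
    exact fun x hx hxv => hv (hxv ▸ hx)
  calc G.edist u v + G.edist v w
      ≤ (p.takeUntil v hv).length + (p.dropUntil v hv).length :=
        add_le_add (edist_le _) (edist_le _)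
    _ = G.edist u w := by rw [← hp, ← Nat.cast_add, ← Walk.length_append, p.take_spec hv]

theorem mem_hNbhd_diff_hNbhd_iff (G H : SimpleGraph V) :
    w ∈ G.hNbhd h u \ H.hNbhd h u ↔ G.edist u w ≤ h ∧ (h : ℕ∞) < H.edist u w := by
  simp only [hNbhd, Set.mem_sdiff, Set.mem_ofPred_eq, not_and, not_le]
  refine ⟨fun ⟨⟨hwu, hle⟩, hgt⟩ => ⟨hle, hgt hwu⟩, fun ⟨hle, hgt⟩ => ?_⟩
  have hwu : w ≠ u := by
    rintro rfl
    simp at hgt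
  exact ⟨⟨hwu, hle⟩, fun _ => hgt⟩

end SimpleGraph

theorem stmt2_general (G : SimpleGraph V) (h : ℕ) (v u : V) (s : ℕ)
    (hu : u ∈ G.hNbhd h v) (hs : G.edist u v = (s : ℕ∞)) :
    G.hNbhd h u \ (G.inducedOn {v}ᶜ).hNbhd h u =
      {v} ∪ {w ∈ G.hNbhd (h - s) v | (h : ℕ∞) < (G.inducedOn {v}ᶜ).edist u w} := by
  obtain ⟨huv, hvu⟩ := hu
  have hsh : s ≤ h := by rw [edist_comm, hs] at hvu; exact_mod_cast hvu
  ext w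
  rw [mem_hNbhd_diff_hNbhd_iff]
  by_cases hwv : w = v
  · subst hwv
    have htop := G.edist_inducedOn_eq_top (S := {w}ᶜ) (by simp) huv
    simp [hs, hsh, htop]
  simp only [Set.mem_union, Set.mem_singleton_iff, hwv, false_or, Set.mem_ofPred_eq, hNbhd,
    Ne, not_false_eq_true, true_and, ENat.le_coe_sub_iff_add_le hsh, ← hs]
  refine and_congr_left fun hlt => ⟨fun hle => ?_, fun hle => G.edist_triangle.trans hle⟩
  exact (G.edist_add_edist_le_of_lt_edist_inducedOn_compl (hle.trans_lt hlt)).trans hle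

/-- Observation 2: the vertices removed from the `h`-hop neighborhood of `u`
by deleting `v` are exactly `v` together with
`F_u = {w ∈ N_v^{h-s}(G) : dis_{G(V∖{v})}(u,w) > h}`. -/
theorem stmt2 (G : SimpleGraph V) (h : ℕ) (hpos : 0 < h) (v u : V) (s : ℕ)
    (hu : u ∈ G.hNbhd h v) (hs : G.edist u v = (s : ℕ∞)) :
    G.hNbhd h u \ (G.inducedOn {v}ᶜ).hNbhd h u =
      {v} ∪ {w ∈ G.hNbhd (h - s) v | (h : ℕ∞) < (G.inducedOn {v}ᶜ).edist u w} :=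
  stmt2_general G h v u s hu hs
end

section
/- Let G = (V,E) be a finite undirected simple graph with V nonempty and h a positive integer. For v ∈ V, define the (k,h)-core number core_h(v) as the largest integer k ≥ 0 such that there exists S ⊆ V with v ∈ S and d_u^h(G(S)) ≥ k for every u ∈ S. If v attains the minimum h-degree in G, i.e., d_v^h(G) ≤ d_u^h(G) for all u ∈ V, then core_h(v) = d_v^h(G). -/
open SimpleGraph

variable {V : Type*} [Fintype V] [DecidableEq V]

namespace SimpleGraph

omit [Fintype V] [DecidableEq V] in
lemma hNbhd_mono {G G' : SimpleGraph V} (hle : G ≤ G') (h : ℕ) (v : V) :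
    G.hNbhd h v ⊆ G'.hNbhd h v :=
  fun _ ⟨hne, hdist⟩ => ⟨hne, (edist_anti hle).trans hdist⟩

omit [DecidableEq V] in
lemma hDeg_mono {G G' : SimpleGraph V} (hle : G ≤ G') (h : ℕ) (v : V) :
    G.hDeg h v ≤ G'.hDeg h v :=
  Set.ncard_le_ncard (hNbhd_mono hle h v)

omit [Fintype V] [DecidableEq V] in
lemma inducedOn_le (G : SimpleGraph V) (S : Set V) : G.inducedOn S ≤ G :=
  fun _ _ hadj => hadj.1

omit [Fintype V] [DecidableEq V] in
@[simp]
lemma inducedOn_univ (G : SimpleGraph V) : G.inducedOn Set.univ = G := by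
  ext x y
  simp [inducedOn]

omit [DecidableEq V] in
lemma hDeg_inducedOn_le (G : SimpleGraph V) (S : Set V) (h : ℕ) (v : V) :
    (G.inducedOn S).hDeg h v ≤ G.hDeg h v :=
  hDeg_mono (inducedOn_le G S) h v

end SimpleGraph

theorem stmt14_general (G : SimpleGraph V) (h : ℕ) (v : V)
    (hmin : ∀ u : V, G.hDeg h v ≤ G.hDeg h u) :
    sSup {k : ℕ | ∃ S : Set V, v ∈ S ∧ ∀ u ∈ S, k ≤ (G.inducedOn S).hDeg h u} =
      G.hDeg h v := by
  refine IsGreatest.csSup_eq ⟨?_, ?_⟩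
  · exact ⟨Set.univ, Set.mem_univ v, fun u _ => by simpa using hmin u⟩
  · rintro k ⟨S, hvS, hS⟩
    exact (hS v hvS).trans (G.hDeg_inducedOn_le S h v)

/-- If `v` attains the minimum `h`-degree in `G`, then its `(k,h)`-core number — the
largest `k` such that some `S ∋ v` has all its vertices of `h`-degree at least `k`
within `G(S)` — equals `d_v^h(G)`. -/
theorem stmt14 (G : SimpleGraph V) [Nonempty V] (h : ℕ) (hpos : 0 < h) (v : V)
    (hmin : ∀ u : V, G.hDeg h v ≤ G.hDeg h u) :
    sSup {k : ℕ | ∃ S : Set V, v ∈ S ∧ ∀ u ∈ S, k ≤ (G.inducedOn S).hDeg h u} =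
      G.hDeg h v :=
  stmt14_general G h v hmin
end
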